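/- The spectral radius of a product of two symmetric matrices P, D with ‖P‖ = 1 satisfies ρ(PD) ≤ λ_max(D) when D is positive definite; consequently λ_max(PD) ≤ 1 − μ min_k λ_min(H_k^T H_k) in the cooperative LMS setting. -/

import Mathlib

/-!
Both parts come from `ρ(PD) ≤ ‖PD‖ ≤ ‖P‖ ‖D‖` for the `ℓ²` operator norm. For a real
symmetric matrix this norm is the largest absolute value of an eigenvalue (the spectral radius of
a self-adjoint operator is its norm), so `‖D‖ = λ_max(D)` when `D ≥ 0`. Complex eigenvalues of a
real matrix obey the same bound because complexification does not increase the operator norm. In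
the cooperative LMS setting both factors are (reindexed) block diagonal matrices whose blocks have
the form `1 - c • A` with `A` symmetric, so their spectra, and hence their norms, can be read off
from the spectra of the Laplacian and of the `H_kᵀ H_k`.
-/

open Matrix Kronecker

open scoped Matrix.Norms.L2Operator

theorem spectrum.one_sub_smul_eq {𝕜 A : Type*} [Field 𝕜] [Ring A] [Algebra 𝕜 A] {c : 𝕜}
    (hc : c ≠ 0) (a : A) :
    spectrum 𝕜 (1 - c • a) = (fun s => 1 - c * s) '' spectrum 𝕜 a := by
  rw [← map_one (algebraMap 𝕜 A), ← spectrum.singleton_sub_eq,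
    show c • a = (Units.mk0 c hc) • a from rfl, spectrum.unit_smul_eq_smul]
  ext r
  simp [Set.mem_smul_set, eq_comm]

theorem spectrum.abs_le_of_mem_one_sub_smul {A : Type*} [Ring A] [Algebra ℝ A] {a : A}
    {c l : ℝ} (hc : 0 < c) (h : ∀ s ∈ spectrum ℝ a, l ≤ s ∧ c * s ≤ 1) {r : ℝ}
    (hr : r ∈ spectrum ℝ (1 - c • a)) : |r| ≤ 1 - c * l := by
  rw [spectrum.one_sub_smul_eq hc.ne'] at hr
  obtain ⟨s, hs, rfl⟩ := hr
  obtain ⟨hls, hcs⟩ := h s hs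
  rw [abs_le]
  constructor <;> nlinarith

namespace Matrix

theorem spectrum_blockDiagonal {𝕜 m o : Type*} [Field 𝕜] [Fintype m] [DecidableEq m]
    [Fintype o] [DecidableEq o] (B : o → Matrix m m 𝕜) :
    spectrum 𝕜 (blockDiagonal B) = ⋃ k, spectrum 𝕜 (B k) := by
  ext r
  have hsub : algebraMap 𝕜 _ r - blockDiagonal B = blockDiagonal (algebraMap 𝕜 _ r - B) := by
    rw [Algebra.algebraMap_eq_smul_one, Algebra.algebraMap_eq_smul_one, ← blockDiagonal_one,
      ← blockDiagonal_smul, ← blockDiagonal_sub]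
  simp only [Set.mem_iUnion, spectrum.mem_iff, isUnit_iff_isUnit_det, isUnit_iff_ne_zero,
    not_not, hsub, det_blockDiagonal, Finset.prod_eq_zero_iff, Finset.mem_univ, true_and,
    Pi.sub_apply, Pi.algebraMap_apply]

theorem spectrum_submatrix_equiv {R m n : Type*} [CommRing R] [Fintype m] [DecidableEq m]
    [Fintype n] [DecidableEq n] (A : Matrix n n R) (e : m ≃ n) :
    spectrum R (A.submatrix e e) = spectrum R A :=
  AlgEquiv.spectrum_eq (reindexAlgEquiv R R e.symm) A

theorem kronecker_one_eq_blockDiagonal {R m n : Type*} [CommSemiring R] [DecidableEq n]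
    (L : Matrix m m R) : L ⊗ₖ (1 : Matrix n n R) = blockDiagonal fun _ => L := by
  rw [← diagonal_one, kroneckerMap_diagonal_right _ (fun _ => mul_zero _)]
  simp

section L2OpNorm

variable {𝕜 n : Type*} [RCLike 𝕜] [Fintype n] [DecidableEq n]

theorem norm_le_l2_opNorm_of_mem_spectrum {A : Matrix n n 𝕜} {r : 𝕜}
    (hr : r ∈ spectrum 𝕜 A) : ‖r‖ ≤ ‖A‖ := by
  rw [← AlgEquiv.spectrum_eq (toEuclideanCLM (n := n) (𝕜 := 𝕜)) A] at hr
  exact (spectrum.norm_le_norm_mul_of_mem hr).trans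
    (mul_le_of_le_one_right (norm_nonneg _) ContinuousLinearMap.norm_id_le)

theorem IsHermitian.l2_opNorm_le {A : Matrix n n 𝕜} (hA : A.IsHermitian) {c : ℝ}
    (hc : 0 ≤ c) (h : ∀ r ∈ spectrum 𝕜 A, ‖r‖ ≤ c) : ‖A‖ ≤ c := by
  have hrad := (toEuclideanCLM (n := n) (𝕜 := 𝕜) A).spectralRadius_eq_nnnorm
    (hA.isSelfAdjoint.map _)
  rw [← cstar_nnnorm_def, spectralRadius, AlgEquiv.spectrum_eq] at hrad
  have : ‖A‖₊ ≤ c.toNNReal := ENNReal.coe_le_coe.mp <|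
    hrad ▸ iSup₂_le fun r hr => ENNReal.coe_le_coe.mpr <|
      (Real.le_toNNReal_iff_coe_le hc).mpr (h r hr)
  exact (Real.le_toNNReal_iff_coe_le hc).mp this

theorem IsHermitian.l2_opNorm_submatrix_equiv_le {m : Type*} [Fintype m] [DecidableEq m]
    {A : Matrix n n 𝕜} (hA : A.IsHermitian) (e : m ≃ n) : ‖A.submatrix e e‖ ≤ ‖A‖ :=
  (hA.submatrix e).l2_opNorm_le (norm_nonneg _) fun r hr =>
    norm_le_l2_opNorm_of_mem_spectrum (by rwa [spectrum_submatrix_equiv] at hr)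

theorem IsHermitian.l2_opNorm_submatrix_equiv {m : Type*} [Fintype m] [DecidableEq m]
    {A : Matrix n n 𝕜} (hA : A.IsHermitian) (e : m ≃ n) : ‖A.submatrix e e‖ = ‖A‖ := by
  refine le_antisymm (hA.l2_opNorm_submatrix_equiv_le e) ?_
  simpa using (hA.submatrix e).l2_opNorm_submatrix_equiv_le e.symm

theorem PosSemidef.l2_opNorm_eq_of_isGreatest {A : Matrix n n ℝ} (hA : A.PosSemidef) {c : ℝ}
    (hc : IsGreatest (spectrum ℝ A) c) : ‖A‖ = c := by
  have hnonneg := (posSemidef_iff_isHermitian_and_spectrum_nonneg.mp hA).2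
  have hc0 : 0 ≤ c := hnonneg hc.1
  refine le_antisymm (hA.isHermitian.l2_opNorm_le hc0 fun r hr => ?_) ?_
  · rw [Real.norm_of_nonneg (hnonneg hr)]
    exact hc.2 hr
  · simpa [abs_of_nonneg hc0] using norm_le_l2_opNorm_of_mem_spectrum hc.1

end L2OpNorm

section OneSubSmul

variable {m o : Type*} [Fintype m] [DecidableEq m] [Fintype o] [DecidableEq o]
  {B : o → Matrix m m ℝ} {c l : ℝ}

theorem l2_opNorm_blockDiagonal_one_sub_smul_le (hB : ∀ k, (B k).IsHermitian) (hc : 0 < c)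
    (hcl : c * l ≤ 1) (h : ∀ k, ∀ s ∈ spectrum ℝ (B k), l ≤ s ∧ c * s ≤ 1) :
    ‖blockDiagonal fun k => 1 - c • B k‖ ≤ 1 - c * l := by
  refine (isHermitian_blockDiagonal_iff.mpr fun k => isHermitian_one.sub ((hB k).smul (.all c))
    ).l2_opNorm_le (sub_nonneg.mpr hcl) fun r hr => ?_
  rw [spectrum_blockDiagonal, Set.mem_iUnion] at hr
  obtain ⟨k, hk⟩ := hr
  exact spectrum.abs_le_of_mem_one_sub_smul hc (h k) hk

theorem l2_opNorm_blockDiagonal_one_sub_smul_submatrix_swap_le (hB : ∀ k, (B k).IsHermitian)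
    (hc : 0 < c) (hcl : c * l ≤ 1) (h : ∀ k, ∀ s ∈ spectrum ℝ (B k), l ≤ s ∧ c * s ≤ 1) :
    ‖(blockDiagonal fun k => 1 - c • B k).submatrix Prod.swap Prod.swap‖ ≤ 1 - c * l :=
  calc _ = ‖blockDiagonal fun k => 1 - c • B k‖ :=
        (isHermitian_blockDiagonal_iff.mpr fun k => isHermitian_one.sub ((hB k).smul (.all c))
          ).l2_opNorm_submatrix_equiv (Equiv.prodComm o m)
    _ ≤ 1 - c * l := l2_opNorm_blockDiagonal_one_sub_smul_le hB hc hcl h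

theorem l2_opNorm_one_sub_smul_kronecker_one_le {L : Matrix o o ℝ} (hL : L.IsHermitian)
    (hc : 0 < c) (h : ∀ s ∈ spectrum ℝ L, 0 ≤ s ∧ c * s ≤ 1) :
    ‖1 - c • (L ⊗ₖ (1 : Matrix m m ℝ))‖ ≤ 1 := by
  have hblock : 1 - c • (L ⊗ₖ (1 : Matrix m m ℝ)) = blockDiagonal fun _ => 1 - c • L := by
    rw [kronecker_one_eq_blockDiagonal, ← blockDiagonal_one, ← blockDiagonal_smul,
      ← blockDiagonal_sub]
    rfl
  simpa [hblock] using
    l2_opNorm_blockDiagonal_one_sub_smul_le (fun _ => hL) hc (by simp) fun _ => h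

end OneSubSmul

section Complexification

theorem re_mulVec_map_ofReal {m n : Type*} [Fintype n] (A : Matrix m n ℝ) (z : n → ℂ) (i : m) :
    ((A.map Complex.ofReal *ᵥ z) i).re = (A *ᵥ fun j => (z j).re) i := by
  simp [mulVec, dotProduct, Complex.re_sum]

theorem im_mulVec_map_ofReal {m n : Type*} [Fintype n] (A : Matrix m n ℝ) (z : n → ℂ) (i : m) :
    ((A.map Complex.ofReal *ᵥ z) i).im = (A *ᵥ fun j => (z j).im) i := by
  simp [mulVec, dotProduct, Complex.im_sum]

variable {n : Type*} [Fintype n] [DecidableEq n]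

theorem sum_sq_mulVec_le_l2_opNorm_sq_mul (A : Matrix n n ℝ) (x : n → ℝ) :
    ∑ i, (A *ᵥ x) i ^ 2 ≤ ‖A‖ ^ 2 * ∑ i, x i ^ 2 := by
  have h := (toEuclideanCLM (n := n) (𝕜 := ℝ) A).le_opNorm (WithLp.toLp 2 x)
  rw [← cstar_norm_def, toEuclideanCLM_toLp] at h
  simpa [mul_pow, EuclideanSpace.norm_sq_eq] using pow_le_pow_left₀ (norm_nonneg _) h 2

theorem l2_opNorm_map_ofReal_le (A : Matrix n n ℝ) : ‖A.map Complex.ofReal‖ ≤ ‖A‖ := by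
  rw [cstar_norm_def]
  refine ContinuousLinearMap.opNorm_le_bound _ (norm_nonneg _) fun z => ?_
  refine (sq_le_sq₀ (norm_nonneg _) (by positivity)).mp ?_
  have hre := A.sum_sq_mulVec_le_l2_opNorm_sq_mul fun j => (z j).re
  have him := A.sum_sq_mulVec_le_l2_opNorm_sq_mul fun j => (z j).im
  simp only [EuclideanSpace.norm_sq_eq, ofLp_toEuclideanCLM, mul_pow, Complex.sq_norm,
    Complex.normSq_apply, re_mulVec_map_ofReal, im_mulVec_map_ofReal, ← sq,
    Finset.sum_add_distrib, mul_add]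
  linarith

theorem norm_le_l2_opNorm_of_mem_spectrum_map_ofReal {A : Matrix n n ℝ} {μ : ℂ}
    (hμ : μ ∈ spectrum ℂ (A.map Complex.ofReal)) : ‖μ‖ ≤ ‖A‖ :=
  (norm_le_l2_opNorm_of_mem_spectrum hμ).trans (l2_opNorm_map_ofReal_le A)

end Complexification

end Matrix

theorem spectral_radius_product_bound_general
    (K m N : ℕ)
    (G : SimpleGraph (Fin K)) [DecidableRel G.Adj]
    (lmax : ℝ) (hlmax : IsGreatest (spectrum ℝ (G.lapMatrix ℝ)) lmax)
    (η : ℝ) (hη : 0 < η) (hηlt : η < 1 / lmax)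
    (H : Fin K → Matrix (Fin m) (Fin N) ℝ)
    (μc : ℝ) (hμ : 0 < μc)
    (hspec : ∀ k : Fin K, ∀ x ∈ spectrum ℝ ((H k)ᵀ * H k), x < 1 / μc)
    (lmin : ℝ) (hlmin : IsLeast (⋃ k : Fin K, spectrum ℝ ((H k)ᵀ * H k)) lmin) :
    (∀ (n : ℕ) (P D : Matrix (Fin n) (Fin n) ℝ), P.IsSymm → D.IsSymm → D.PosDef →
      ‖Matrix.toEuclideanCLM (𝕜 := ℝ) P‖ = 1 →
      ∀ dmax : ℝ, IsGreatest (spectrum ℝ D) dmax →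
      ∀ μ ∈ spectrum ℂ ((P * D).map Complex.ofReal), ‖μ‖ ≤ dmax)
    ∧ (∀ μ ∈ spectrum ℝ
        ((((1 : Matrix (Fin K × Fin N) (Fin K × Fin N) ℝ)
              - η • (G.lapMatrix ℝ ⊗ₖ (1 : Matrix (Fin N) (Fin N) ℝ)))
          * ((Matrix.blockDiagonal
              (fun k : Fin K => (1 : Matrix (Fin N) (Fin N) ℝ) - μc • ((H k)ᵀ * H k))).submatrix
                Prod.swap Prod.swap))),
        μ ≤ 1 - μc * lmin) := by
  refine ⟨fun n P D _ _ hD hP dmax hdmax μ hμ' => ?_, fun μ hμ' => ?_⟩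
  · rw [← cstar_norm_def] at hP
    calc ‖μ‖ ≤ ‖P * D‖ := norm_le_l2_opNorm_of_mem_spectrum_map_ofReal hμ'
      _ ≤ ‖P‖ * ‖D‖ := norm_mul_le P D
      _ = dmax := by rw [hP, one_mul, hD.posSemidef.l2_opNorm_eq_of_isGreatest hdmax]
  set L := G.lapMatrix ℝ
  set A : Fin K → Matrix (Fin N) (Fin N) ℝ := fun k => (H k)ᵀ * H k
  have hL : L.PosSemidef := SimpleGraph.posSemidef_lapMatrix ℝ G
  have hLspec : ∀ s ∈ spectrum ℝ L, 0 ≤ s ∧ η * s ≤ 1 := by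
    have hnonneg := (posSemidef_iff_isHermitian_and_spectrum_nonneg.mp hL).2
    have hlmax_pos : 0 < lmax := (hnonneg hlmax.1).lt_of_ne fun h => by
      rw [← h, div_zero] at hηlt
      linarith
    have hηlmax : η * lmax < 1 := (lt_div_iff₀ hlmax_pos).mp hηlt
    exact fun s hs => ⟨hnonneg hs, by nlinarith [hlmax.2 hs]⟩
  have hAspec : ∀ k, ∀ s ∈ spectrum ℝ (A k), lmin ≤ s ∧ μc * s ≤ 1 := fun k s hs =>
    ⟨hlmin.2 (Set.mem_iUnion.mpr ⟨k, hs⟩), ((lt_div_iff₀' hμ).mp (hspec k s hs)).le⟩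
  have hA : ∀ k, (A k).IsHermitian := fun k => by
    simpa [A, conjTranspose_eq_transpose_of_trivial] using isHermitian_conjTranspose_mul_self (H k)
  have hμlmin : μc * lmin ≤ 1 := by
    obtain ⟨k, hk⟩ := Set.mem_iUnion.mp hlmin.1
    exact (hAspec k lmin hk).2
  calc μ ≤ ‖μ‖ := Real.le_norm_self μ
    _ ≤ _ := norm_le_l2_opNorm_of_mem_spectrum hμ'
    _ ≤ _ := norm_mul_le _ _
    _ ≤ 1 * (1 - μc * lmin) := mul_le_mul
        (l2_opNorm_one_sub_smul_kronecker_one_le hL.isHermitian hη hLspec)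
        (l2_opNorm_blockDiagonal_one_sub_smul_submatrix_swap_le hA hμ hμlmin hAspec)
        (norm_nonneg _) zero_le_one
    _ = 1 - μc * lmin := one_mul _

/-- (i) For symmetric matrices `P, D` with operator norm `‖P‖ = 1` and `D`
positive definite, the spectral radius of `P * D` is at most `λ_max(D)`. (ii) Consequently,
in the cooperative LMS setting with `P = I - η (L ⊗ I_N)` and `D` block diagonal with blocks
`I - μ H_kᵀ H_k`, every eigenvalue of `P * D` is at most `1 - μ min_k λ_min(H_kᵀ H_k)`. -/
theorem spectral_radius_product_bound
    (K m N : ℕ) (hK : 0 < K) (hN : 0 < N)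
    (G : SimpleGraph (Fin K)) [DecidableRel G.Adj]
    (lmax : ℝ) (hlmax : IsGreatest (spectrum ℝ (G.lapMatrix ℝ)) lmax)
    (η : ℝ) (hη : 0 < η) (hηlt : η < 1 / lmax)
    (H : Fin K → Matrix (Fin m) (Fin N) ℝ)
    (μc : ℝ) (hμ : 0 < μc)
    (hspec : ∀ k : Fin K, ∀ x ∈ spectrum ℝ ((H k)ᵀ * H k), x < 1 / μc)
    (lmin : ℝ) (hlmin : IsLeast (⋃ k : Fin K, spectrum ℝ ((H k)ᵀ * H k)) lmin) :
    (∀ (n : ℕ) (P D : Matrix (Fin n) (Fin n) ℝ), P.IsSymm → D.IsSymm → D.PosDef →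
      ‖Matrix.toEuclideanCLM (𝕜 := ℝ) P‖ = 1 →
      ∀ dmax : ℝ, IsGreatest (spectrum ℝ D) dmax →
      ∀ μ ∈ spectrum ℂ ((P * D).map Complex.ofReal), ‖μ‖ ≤ dmax)
    ∧ (∀ μ ∈ spectrum ℝ
        ((((1 : Matrix (Fin K × Fin N) (Fin K × Fin N) ℝ)
              - η • (G.lapMatrix ℝ ⊗ₖ (1 : Matrix (Fin N) (Fin N) ℝ)))
          * ((Matrix.blockDiagonal
              (fun k : Fin K => (1 : Matrix (Fin N) (Fin N) ℝ) - μc • ((H k)ᵀ * H k))).submatrix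
                Prod.swap Prod.swap))),
        μ ≤ 1 - μc * lmin) :=
  spectral_radius_product_bound_general K m N G lmax hlmax η hη hηlt H μc hμ hspec lmin hlmin
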